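/- Let n ≥ 1, 1 ≤ m ≤ n, and let M_1, …, M_m be positive integers with |M| = M_1+…+M_m, and set μ = |M|^{|M|}/(M_1^{M_1}⋯M_m^{M_m}). Then there exist constants c, C > 0 such that for all integers l ≥ 0: c·(l+1)^{(m+1)/2 − n}·μ^{−l} ≤ (M_1 l)!·(M_2 l)!⋯(M_m l)! / (n − 1 + |M|·l)! ≤ C·(l+1)^{(m+1)/2 − n}·μ^{−l}. -/

import Mathlib

/-!
By Stirling's formula `(a l)! ≍ √l · (a^a)^l · (l/e)^(a l)`, and `(N + k)! ~ N! · N^k`. In the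
quotient `∏ (Mᵢ l)! / (n - 1 + |M| l)!` the factors `(l/e)^(|M| l)` cancel, the factors `Mᵢ^(Mᵢ l)`
and `|M|^(|M| l)` combine into `μ^(-l)`, and the powers of `l` leave `l^((m - 1)/2 - (n - 1))`.
Two positive sequences that are `Θ` of each other are comparable up to constants at every `l`,
not only eventually.
-/
open Filter Asymptotics Real Nat

lemma natCast_add_isEquivalent (x : ℝ) :
    (fun N : ℕ => (N : ℝ) + x) ~[atTop] fun N => (N : ℝ) := by
  have hne : ∀ᶠ N : ℕ in atTop, (N : ℝ) + x ≠ 0 :=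
    (tendsto_atTop_add_const_right _ x tendsto_natCast_atTop_atTop).eventually_ne_atTop 0
  exact ((isEquivalent_iff_tendsto_one hne).2 (tendsto_natCast_div_add_atTop x)).symm

lemma factorial_add_isEquivalent (k : ℕ) :
    (fun N : ℕ => ((N + k)! : ℝ)) ~[atTop] fun N => (N ! : ℝ) * (N : ℝ) ^ k := by
  have hdesc : (fun N : ℕ => ((N + k).descFactorial k : ℝ)) ~[atTop] fun N => (N : ℝ) ^ k := by
    have h := (isEquivalent_descFactorial k).comp_tendsto (tendsto_add_atTop_nat k)
    have hpow := (natCast_add_isEquivalent k).pow k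
    push_cast [Function.comp_def] at h
    exact h.trans hpow
  refine (IsEquivalent.refl.mul hdesc).congr_left (Eventually.of_forall fun N => ?_)
  have := Nat.factorial_mul_descFactorial (Nat.le_add_left k N)
  simp only [Nat.add_sub_cancel] at this
  simp only [Pi.mul_apply]
  exact_mod_cast this

lemma factorial_mul_isTheta {a : ℕ} (ha : 0 < a) :
    (fun l : ℕ => ((a * l)! : ℝ)) =Θ[atTop]
      fun l => √l * ((a : ℝ) ^ a) ^ l * ((l / exp 1) ^ l) ^ a := by
  have hstir := Stirling.factorial_isEquivalent_stirling.comp_tendsto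
    (tendsto_id.const_mul_atTop' ha)
  refine hstir.isTheta.trans_eventuallyEq ?_ |>.trans
    (isTheta_rfl.const_mul_left (c := √(2 * a * π)) (by positivity))
  refine Eventually.of_forall fun l => ?_
  simp only [Function.comp_apply, id, Nat.cast_mul]
  rw [show 2 * (a * l : ℝ) * π = (2 * a * π) * l by ring, Real.sqrt_mul (by positivity),
    mul_div_assoc, mul_pow, pow_mul, pow_mul' (l / exp 1 : ℝ)]
  ring

lemma factorial_mul_add_isTheta {a : ℕ} (ha : 0 < a) (k : ℕ) :
    (fun l : ℕ => ((k + a * l)! : ℝ)) =Θ[atTop]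
      fun l => √l * ((a : ℝ) ^ a) ^ l * ((l / exp 1) ^ l) ^ a * (l : ℝ) ^ k := by
  have hcast : (fun l : ℕ => ((a * l : ℕ) : ℝ) ^ k) =Θ[atTop] fun l => (l : ℝ) ^ k := by
    push_cast
    exact (isTheta_rfl.const_mul_left (by positivity)).pow k
  simp_rw [add_comm k]
  exact ((factorial_add_isEquivalent k).comp_tendsto (tendsto_id.const_mul_atTop' ha)).isTheta.trans
    ((factorial_mul_isTheta ha).mul hcast)

lemma sqrt_pow_div_eq_rpow {x : ℝ} (hx : 0 < x) (m : ℕ) {n : ℕ} (hn : 1 ≤ n) :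
    √x ^ m / (√x * x ^ (n - 1)) = x ^ (((m : ℝ) + 1) / 2 - n) := by
  rw [Real.sqrt_eq_rpow, ← Real.rpow_natCast, ← Real.rpow_natCast x, ← Real.rpow_mul hx.le,
    ← Real.rpow_add hx, ← Real.rpow_sub hx, Nat.cast_sub hn]
  congr 1
  push_cast
  ring

lemma stirling_quotient_eq {m n : ℕ} (hn : 1 ≤ n) (M : Fin m → ℕ) {x q : ℝ} (hx : 0 < x)
    (hq : 0 < q) (l : ℕ) :
    (∏ i, √x * ((M i : ℝ) ^ M i) ^ l * q ^ M i) /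
        (√x * (((∑ i, M i : ℕ) : ℝ) ^ (∑ i, M i)) ^ l * q ^ (∑ i, M i) * x ^ (n - 1)) =
      x ^ (((m : ℝ) + 1) / 2 - n) *
        ((((∑ i, M i) ^ (∑ i, M i) : ℕ) : ℝ) / ∏ i, ((M i : ℝ) ^ M i)) ^ (-(l : ℝ)) := by
  rw [Real.rpow_neg (by positivity), Real.rpow_natCast, ← sqrt_pow_div_eq_rpow hx m hn,
    Finset.prod_mul_distrib, Finset.prod_mul_distrib, Finset.prod_const, Finset.prod_pow,
    Finset.prod_pow_eq_pow_sum, Finset.card_univ, Fintype.card_fin]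
  have hsqrt : 0 < √x := Real.sqrt_pos.2 hx
  push_cast
  field_simp
  rw [div_pow, one_div_div]

lemma exists_pos_bounds_of_isTheta {f g : ℕ → ℝ} (hf : ∀ l, 0 < f l) (hg : ∀ l, 0 < g l)
    (h : f =Θ[atTop] g) : ∃ c C : ℝ, 0 < c ∧ 0 < C ∧ ∀ l, c * g l ≤ f l ∧ f l ≤ C * g l := by
  obtain ⟨C, hC, hfg⟩ := (h.isBigO.nat_of_atTop (l := ⊤) (by simp [(hg _).ne'])).exists_pos
  obtain ⟨D, hD, hgf⟩ := (h.symm.isBigO.nat_of_atTop (l := ⊤) (by simp [(hf _).ne'])).exists_pos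
  refine ⟨D⁻¹, C, inv_pos.2 hD, hC, fun l => ⟨?_, ?_⟩⟩
  · have hgl := isBigOWith_top.1 hgf l
    rwa [Real.norm_of_nonneg (hf l).le, Real.norm_of_nonneg (hg l).le, ← inv_mul_le_iff₀ hD]
      at hgl
  · have hfl := isBigOWith_top.1 hfg l
    rwa [Real.norm_of_nonneg (hf l).le, Real.norm_of_nonneg (hg l).le] at hfl

theorem stmt_5_general (n m : ℕ) (hn : 1 ≤ n) (hm : 1 ≤ m)
    (M : Fin m → ℕ) (hM : ∀ i, 1 ≤ M i) :
    ∃ c C : ℝ, 0 < c ∧ 0 < C ∧ ∀ l : ℕ,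
      c * ((l : ℝ) + 1) ^ (((m : ℝ) + 1) / 2 - n) *
          ((((∑ i, M i) ^ (∑ i, M i) : ℕ) : ℝ) / ∏ i, ((M i : ℝ) ^ M i)) ^ (-(l : ℝ)) ≤
        (∏ i, (((M i * l).factorial : ℕ) : ℝ)) / (((n - 1 + (∑ i, M i) * l).factorial : ℕ) : ℝ) ∧
      (∏ i, (((M i * l).factorial : ℕ) : ℝ)) / (((n - 1 + (∑ i, M i) * l).factorial : ℕ) : ℝ) ≤
        C * ((l : ℝ) + 1) ^ (((m : ℝ) + 1) / 2 - n) *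
          ((((∑ i, M i) ^ (∑ i, M i) : ℕ) : ℝ) / ∏ i, ((M i : ℝ) ^ M i)) ^ (-(l : ℝ)) := by
  set S := ∑ i, M i
  set μ : ℝ := ((S ^ S : ℕ) : ℝ) / ∏ i, ((M i : ℝ) ^ M i)
  set E : ℝ := ((m : ℝ) + 1) / 2 - n
  have hS : 0 < S := Finset.sum_pos (fun i _ => hM i) ⟨⟨0, hm⟩, Finset.mem_univ _⟩
  have hnum := IsTheta.finsetProd (s := Finset.univ) fun i _ => factorial_mul_isTheta (hM i)
  have hden := factorial_mul_add_isTheta hS (n - 1)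
  have hshift : (fun l : ℕ => ((l : ℝ) + 1) ^ E) =Θ[atTop] fun l => (l : ℝ) ^ E :=
    (natCast_add_isEquivalent 1).isTheta.rpow (.of_forall fun _ => by positivity)
      (.of_forall fun _ => by positivity)
  have key : (fun l : ℕ => (∏ i, ((M i * l)! : ℝ)) / ((n - 1 + S * l)! : ℝ)) =Θ[atTop]
      fun l => ((l : ℝ) + 1) ^ E * μ ^ (-(l : ℝ)) := by
    refine ((hnum.div hden).trans_eventuallyEq ?_).trans (hshift.symm.mul isTheta_rfl)
    filter_upwards [eventually_gt_atTop 0] with l hl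
    exact stirling_quotient_eq hn M (by positivity) (by positivity) l
  have hμ : 0 < μ := div_pos (by positivity) (Finset.prod_pos fun i _ => pow_pos (mod_cast hM i) _)
  obtain ⟨c, C, hc, hC, hbounds⟩ := exists_pos_bounds_of_isTheta
    (fun l => div_pos (Finset.prod_pos fun i _ => by positivity) (by positivity))
    (fun l => by positivity) key
  refine ⟨c, C, hc, hC, fun l => ?_⟩
  simpa only [mul_assoc] using hbounds l

/-- two-sided Stirling-type estimate: with `|M| = M₁+…+M_m` and
`μ = |M|^{|M|}/(M₁^{M₁}⋯M_m^{M_m})`, one has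
`(M₁l)!⋯(M_ml)!/(n-1+|M|·l)! ≍ (l+1)^{(m+1)/2-n}·μ^{-l}`. -/
theorem stmt_5 (n m : ℕ) (hn : 1 ≤ n) (hm : 1 ≤ m) (hmn : m ≤ n)
    (M : Fin m → ℕ) (hM : ∀ i, 1 ≤ M i) :
    ∃ c C : ℝ, 0 < c ∧ 0 < C ∧ ∀ l : ℕ,
      c * ((l : ℝ) + 1) ^ (((m : ℝ) + 1) / 2 - n) *
          ((((∑ i, M i) ^ (∑ i, M i) : ℕ) : ℝ) / ∏ i, ((M i : ℝ) ^ M i)) ^ (-(l : ℝ)) ≤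
        (∏ i, (((M i * l).factorial : ℕ) : ℝ)) / (((n - 1 + (∑ i, M i) * l).factorial : ℕ) : ℝ) ∧
      (∏ i, (((M i * l).factorial : ℕ) : ℝ)) / (((n - 1 + (∑ i, M i) * l).factorial : ℕ) : ℝ) ≤
        C * ((l : ℝ) + 1) ^ (((m : ℝ) + 1) / 2 - n) *
          ((((∑ i, M i) ^ (∑ i, M i) : ℕ) : ℝ) / ∏ i, ((M i : ℝ) ^ M i)) ^ (-(l : ℝ)) :=
  stmt_5_general n m hn hm M hM
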